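/- arXiv:1802.03042 — 4 statements merged into one kernel-verified Lean document; each statement's English description precedes it below -/
import Mathlib

section
/- Suppose ρ : 𝒳 → ℝ is a convex risk measure, H is a convex subset of the set of trading strategies, and for each ω ∈ Ω the total cost functional δ ↦ C_T(δ)(ω) is convex in δ. Then π(X) := inf_{δ∈H} ρ(X + (δ·S)_T − C_T(δ)) is convex: for every X₁, X₂ ∈ 𝒳 and every α ∈ (0,1), π(αX₁ + (1−α)X₂) ≤ α·π(X₁) + (1−α)·π(X₂), the inequality being understood in ℝ ∪ {−∞}. -/
open Finset

noncomputable section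

/-- Trading gains `(δ·S)_T = Σ_{k<n} δ_k · (S_{k+1} − S_k)`. -/
def gainsT {Ω : Type*} (d n : ℕ) (S : ℕ → Ω → Fin d → ℝ)
    (δ : ℕ → Ω → Fin d → ℝ) (ω : Ω) : ℝ :=
  ∑ k ∈ Finset.range n, ∑ i, δ k ω i * (S (k + 1) ω i - S k ω i)

/-- Position at time `k`, with the conventions `δ₋₁ = δ_n = 0`
(positions at indices `≥ n` are clamped to `0`). -/
def posn {Ω : Type*} (d n : ℕ) (δ : ℕ → Ω → Fin d → ℝ) (k : ℕ) (ω : Ω) : Fin d → ℝ :=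
  if k < n then δ k ω else 0

/-- Increment `δ_k − δ_{k−1}` (with `δ₋₁ = 0`). -/
def incr {Ω : Type*} (d n : ℕ) (δ : ℕ → Ω → Fin d → ℝ) (k : ℕ) (ω : Ω) : Fin d → ℝ :=
  posn d n δ k ω - if k = 0 then 0 else posn d n δ (k - 1) ω

/-- Total trading cost `C_T(δ) = Σ_{k=0}^{n} c_k(δ_k − δ_{k−1})`. -/
def costT {Ω : Type*} (d n : ℕ) (c : ℕ → Ω → (Fin d → ℝ) → ℝ)
    (δ : ℕ → Ω → Fin d → ℝ) (ω : Ω) : ℝ :=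
  ∑ k ∈ Finset.range (n + 1), c k ω (incr d n δ k ω)

/-- `π(X) = inf_{δ ∈ H} ρ(X + (δ·S)_T − C_T(δ))`, valued in `ℝ ∪ {−∞}` (as `EReal`). -/
def piF {Ω : Type*} (d n : ℕ) (S : ℕ → Ω → Fin d → ℝ)
    (c : ℕ → Ω → (Fin d → ℝ) → ℝ) (H : Set (ℕ → Ω → Fin d → ℝ))
    (ρ : (Ω → ℝ) → ℝ) (X : Ω → ℝ) : EReal :=
  ⨅ δ ∈ H, ((ρ (fun ω => X ω + gainsT d n S δ ω - costT d n c δ ω) : EReal))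
/-! The hedged risk `(X, δ) ↦ ρ(X + (δ·S)_T − C_T(δ))` is jointly convex: the payoff is jointly
concave (the gains are linear in `δ`, the cost is convex) and `ρ` is convex and antitone. Mixing
`ε`-optimal strategies for `X₁` and `X₂` with the weights of `X₁` and `X₂` gives an admissible
strategy for the mixed claim, so the infimum over a convex set of strategies is again convex. -/

theorem EReal.le_coe_mul_add_coe_mul {x A B : EReal} {a b : ℝ} (ha : 0 < a) (hb : 0 < b)
    (hA : A ≠ ⊤) (hB : B ≠ ⊤)
    (h : ∀ r₁ r₂ : ℝ, A < r₁ → B < r₂ → x ≤ ((a * r₁ + b * r₂ : ℝ) : EReal)) :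
    x ≤ a * A + b * B := by
  have mul_ne_top {c : ℝ} {C : EReal} (hc : 0 < c) (hC : C ≠ ⊤) : (c : EReal) * C ≠ ⊤ :=
    (EReal.mul_ne_top _ _).2
      ⟨.inl (coe_ne_bot _), .inl (EReal.coe_nonneg.2 hc.le), .inl (coe_ne_top _), .inr hC⟩
  have lt_div {c s : ℝ} {C : EReal} (hc : 0 < c) (hs : (c : EReal) * C < s) :
      C < (s / c : ℝ) := by
    refine lt_of_mul_lt_mul_left ?_ (EReal.coe_nonneg.2 hc.le)
    rwa [← EReal.coe_mul, mul_div_cancel₀ _ hc.ne']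
  refine EReal.le_add_of_forall_gt (.inr (mul_ne_top hb hB)) (.inl (mul_ne_top ha hA))
    fun s hs t ht => ?_
  induction s using EReal.rec with
  | bot => exact absurd hs not_lt_bot
  | top => rw [EReal.top_add_of_ne_bot ht.ne_bot]; exact le_top
  | coe s =>
    induction t using EReal.rec with
    | bot => exact absurd ht not_lt_bot
    | top => rw [EReal.add_top_of_ne_bot (EReal.coe_ne_bot s)]; exact le_top
    | coe t =>
      calc x ≤ ((a * (s / a) + b * (t / b) : ℝ) : EReal) := h _ _ (lt_div ha hs) (lt_div hb ht)
        _ = s + t := by rw [mul_div_cancel₀ _ ha.ne', mul_div_cancel₀ _ hb.ne', EReal.coe_add]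

theorem ConvexOn.biInf_snd_convexComb_le {E F : Type*} [AddCommGroup E] [Module ℝ E]
    [AddCommGroup F] [Module ℝ F] {H : Set F} {f : E × F → ℝ}
    (hf : ConvexOn ℝ (Set.univ ×ˢ H) f) (x₁ x₂ : E) {a b : ℝ} (ha : 0 < a) (hb : 0 < b)
    (hab : a + b = 1) :
    ⨅ y ∈ H, (f (a • x₁ + b • x₂, y) : EReal) ≤
      a * (⨅ y ∈ H, (f (x₁, y) : EReal)) + b * ⨅ y ∈ H, (f (x₂, y) : EReal) := by
  rcases H.eq_empty_or_nonempty with rfl | ⟨y₀, hy₀⟩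
  · simp [EReal.coe_mul_top_of_pos ha, EReal.coe_mul_top_of_pos hb]
  have ne_top (x : E) : ⨅ y ∈ H, (f (x, y) : EReal) ≠ ⊤ :=
    ne_top_of_le_ne_top (EReal.coe_ne_top _) (biInf_le _ hy₀)
  refine EReal.le_coe_mul_add_coe_mul ha hb (ne_top x₁) (ne_top x₂) fun r₁ r₂ h₁ h₂ => ?_
  simp only [iInf_lt_iff, exists_prop] at h₁ h₂
  obtain ⟨y₁, hy₁, hr₁⟩ := h₁
  obtain ⟨y₂, hy₂, hr₂⟩ := h₂
  have hp₁ : (x₁, y₁) ∈ Set.univ ×ˢ H := ⟨Set.mem_univ x₁, hy₁⟩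
  have hp₂ : (x₂, y₂) ∈ Set.univ ×ˢ H := ⟨Set.mem_univ x₂, hy₂⟩
  have hmem := hf.1 hp₁ hp₂ ha.le hb.le hab
  have hmix := hf.2 hp₁ hp₂ ha.le hb.le hab
  simp only [Prod.smul_mk, Prod.mk_add_mk, smul_eq_mul] at hmix
  refine (biInf_le _ hmem.2).trans (EReal.coe_le_coe_iff.2 (hmix.trans ?_))
  gcongr
  · exact_mod_cast hr₁.le
  · exact_mod_cast hr₂.le

section Hedging

variable {Ω : Type*} (d n : ℕ) (S : ℕ → Ω → Fin d → ℝ) (c : ℕ → Ω → (Fin d → ℝ) → ℝ)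

def hedgedPayoff (X : Ω → ℝ) (δ : ℕ → Ω → Fin d → ℝ) : Ω → ℝ :=
  fun ω => X ω + gainsT d n S δ ω - costT d n c δ ω

theorem gainsT_smul_add_smul (δ₁ δ₂ : ℕ → Ω → Fin d → ℝ) (a b : ℝ) (ω : Ω) :
    gainsT d n S (a • δ₁ + b • δ₂) ω = a * gainsT d n S δ₁ ω + b * gainsT d n S δ₂ ω := by
  simp only [gainsT, Finset.mul_sum, ← Finset.sum_add_distrib, Pi.add_apply, Pi.smul_apply,
    smul_eq_mul]
  exact Finset.sum_congr rfl fun k _ => Finset.sum_congr rfl fun i _ => by ring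

variable {d n c}

theorem concaveOn_hedgedPayoff
    (hC : ∀ ω, ConvexOn ℝ (Set.univ : Set (ℕ → Ω → Fin d → ℝ)) (fun δ => costT d n c δ ω)) :
    ConcaveOn ℝ Set.univ fun p : (Ω → ℝ) × (ℕ → Ω → Fin d → ℝ) =>
      hedgedPayoff d n S c p.1 p.2 := by
  refine ⟨convex_univ, fun p _ q _ a b ha hb hab ω => ?_⟩
  have hcost := (hC ω).2 (Set.mem_univ p.2) (Set.mem_univ q.2) ha hb hab
  simp only [hedgedPayoff, Prod.fst_add, Prod.snd_add, Prod.smul_fst, Prod.smul_snd,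
    Pi.add_apply, Pi.smul_apply, smul_eq_mul, gainsT_smul_add_smul] at hcost ⊢
  linarith

theorem convexOn_hedgedRisk
    (hC : ∀ ω, ConvexOn ℝ (Set.univ : Set (ℕ → Ω → Fin d → ℝ)) (fun δ => costT d n c δ ω))
    {ρ : (Ω → ℝ) → ℝ} (hρ : ConvexOn ℝ Set.univ ρ) (hρ_anti : Antitone ρ) :
    ConvexOn ℝ Set.univ fun p : (Ω → ℝ) × (ℕ → Ω → Fin d → ℝ) =>
      ρ (hedgedPayoff d n S c p.1 p.2) :=
  have hpayoff := concaveOn_hedgedPayoff S hC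
  ⟨convex_univ, fun _ hp _ hq _ _ ha hb hab =>
    (hρ_anti (hpayoff.2 hp hq ha hb hab)).trans (hρ.2 trivial trivial ha hb hab)⟩

end Hedging

theorem piF_convex_general
    {Ω : Type*}
    (d n : ℕ) (S : ℕ → Ω → Fin d → ℝ)
    (c : ℕ → Ω → (Fin d → ℝ) → ℝ)
    (H : Set (ℕ → Ω → Fin d → ℝ))
    (hHconv : Convex ℝ H)
    (hCconv : ∀ ω : Ω,
      ConvexOn ℝ (Set.univ : Set (ℕ → Ω → Fin d → ℝ)) (fun δ => costT d n c δ ω))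
    (ρ : (Ω → ℝ) → ℝ)
    (hmono : ∀ X₁ X₂ : Ω → ℝ, (∀ ω, X₂ ω ≤ X₁ ω) → ρ X₁ ≤ ρ X₂)
    (hconv : ∀ (X₁ X₂ : Ω → ℝ) (a : ℝ), a ∈ Set.Icc (0 : ℝ) 1 →
      ρ (fun ω => a * X₁ ω + (1 - a) * X₂ ω) ≤ a * ρ X₁ + (1 - a) * ρ X₂) :
    ∀ (X₁ X₂ : Ω → ℝ) (a : ℝ), a ∈ Set.Ioo (0 : ℝ) 1 →
      piF d n S c H ρ (fun ω => a * X₁ ω + (1 - a) * X₂ ω) ≤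
        (a : EReal) * piF d n S c H ρ X₁ + ((1 - a : ℝ) : EReal) * piF d n S c H ρ X₂ := by
  rintro X₁ X₂ a ⟨ha₀, ha₁⟩
  have hρ : ConvexOn ℝ Set.univ ρ := ⟨convex_univ, fun X₁ _ X₂ _ a b ha hb hab => by
    obtain rfl : b = 1 - a := eq_sub_of_add_eq' hab
    exact hconv X₁ X₂ a ⟨ha, by linarith⟩⟩
  have hρ_anti : Antitone ρ := fun X₁ X₂ h => hmono X₂ X₁ h
  have hrisk := (convexOn_hedgedRisk S hCconv hρ hρ_anti).subset (Set.subset_univ _)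
    (convex_univ.prod hHconv)
  exact hrisk.biInf_snd_convexComb_le X₁ X₂ ha₀ (sub_pos.2 ha₁) (add_sub_cancel a 1)

/-- if `ρ` is a convex risk measure, `H` is convex and the total-cost
functional is convex in the strategy (for each `ω`), then `π` is convex
(with values in `ℝ ∪ {−∞}`). -/
theorem piF_convex
    {Ω : Type*} [Fintype Ω] [Nonempty Ω]
    (P : Ω → ℝ) (hPpos : ∀ ω, 0 < P ω) (hPsum : ∑ ω, P ω = 1)
    (d n : ℕ) (S : ℕ → Ω → Fin d → ℝ)
    (c : ℕ → Ω → (Fin d → ℝ) → ℝ)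
    (hc0 : ∀ k ω, c k ω 0 = 0) (hcnonneg : ∀ k ω v, 0 ≤ c k ω v)
    (H : Set (ℕ → Ω → Fin d → ℝ)) (hH : H.Nonempty)
    (hHconv : Convex ℝ H)
    (hCconv : ∀ ω : Ω,
      ConvexOn ℝ (Set.univ : Set (ℕ → Ω → Fin d → ℝ)) (fun δ => costT d n c δ ω))
    (ρ : (Ω → ℝ) → ℝ)
    (hmono : ∀ X₁ X₂ : Ω → ℝ, (∀ ω, X₂ ω ≤ X₁ ω) → ρ X₁ ≤ ρ X₂)
    (hconv : ∀ (X₁ X₂ : Ω → ℝ) (a : ℝ), a ∈ Set.Icc (0 : ℝ) 1 →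
      ρ (fun ω => a * X₁ ω + (1 - a) * X₂ ω) ≤ a * ρ X₁ + (1 - a) * ρ X₂)
    (hcash : ∀ (X : Ω → ℝ) (a : ℝ), ρ (fun ω => X ω + a) = ρ X - a) :
    ∀ (X₁ X₂ : Ω → ℝ) (a : ℝ), a ∈ Set.Ioo (0 : ℝ) 1 →
      piF d n S c H ρ (fun ω => a * X₁ ω + (1 - a) * X₂ ω) ≤
        (a : EReal) * piF d n S c H ρ X₁ + ((1 - a : ℝ) : EReal) * piF d n S c H ρ X₂ :=
  piF_convex_general d n S c H hHconv hCconv ρ hmono hconv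
end
end

section
/- Let (ℱ_k)_{k=0,…,n} be a filtration on Ω, suppose the ℝ^d-valued price process S = (S_k)_{k=0,…,n} is a martingale under P with respect to (ℱ_k), suppose every admissible strategy δ ∈ H is adapted (δ_k is ℱ_k-measurable for each k = 0,…,n−1), and suppose the zero strategy belongs to H. Let ℓ : ℝ → ℝ be nondecreasing and convex and let ρ be the optimized certainty equivalent ρ(X) := inf_{w∈ℝ} { w + E[ℓ(−X − w)] }. Then π(0) = ρ(0), i.e. inf_{δ∈H} ρ((δ·S)_T − C_T(δ)) = ρ(0), the equality holding in ℝ ∪ {−∞}. -/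
open Finset

noncomputable section

open MeasureTheory

/-- The optimized certainty equivalent `ρ(X) = inf_{w∈ℝ} { w + E[ℓ(−X − w)] }` with
expectation taken under the measure `μ`, valued in `ℝ ∪ {−∞}` (as `EReal`). -/
def oceM {Ω : Type*} [MeasurableSpace Ω] (μ : Measure Ω) (ℓ : ℝ → ℝ) (X : Ω → ℝ) : EReal :=
  ⨅ w : ℝ, (((w + ∫ ω, ℓ (-X ω - w) ∂μ) : ℝ) : EReal)

/-! Every admissible `δ` yields a terminal position `X_δ = (δ·S)_T − C_T(δ)` with `E[X_δ] ≤ 0`: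
the gains are a martingale transform of `S`, hence centred, and the costs are nonnegative. For a
convex nondecreasing `ℓ`, Jensen gives `ℓ(−w) ≤ ℓ(E[−X_δ − w]) ≤ E[ℓ(−X_δ − w)]` for every `w`, so
`ρ(X_δ) ≥ ρ(0)`; the zero strategy costs nothing and attains `ρ(0)`. -/

namespace MeasureTheory.Martingale

variable {Ω E : Type*} {m0 : MeasurableSpace Ω} {μ : Measure Ω}
  [NormedAddCommGroup E] [NormedSpace ℝ E] [CompleteSpace E]

theorem comp_continuousLinearMap {ι F : Type*} [Preorder ι] {ℱ : Filtration ι m0}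
    [NormedAddCommGroup F] [NormedSpace ℝ F] [CompleteSpace F] {f : ι → Ω → E}
    (hf : Martingale f ℱ μ) (T : E →L[ℝ] F) : Martingale (fun i ω => T (f i ω)) ℱ μ :=
  ⟨fun i => T.continuous.comp_stronglyMeasurable (hf.stronglyMeasurable i), fun _ j hij =>
    (T.comp_condExp_comm (hf.integrable j)).symm.trans ((hf.condExp_ae_eq hij).fun_comp T)⟩

variable {ℱ : Filtration ℕ m0}

theorem condExp_sub_ae_eq_zero {f : ℕ → Ω → E} (hf : Martingale f ℱ μ) {i j : ℕ} (hij : i ≤ j) :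
    μ[f j - f i | ℱ i] =ᵐ[μ] 0 := by
  filter_upwards [condExp_sub (hf.integrable j) (hf.integrable i) (ℱ i),
    hf.condExp_ae_eq hij, hf.condExp_ae_eq (le_refl i)] with ω h hj hi
  simp [h, hj, hi]

theorem integral_mul_sub_eq_zero [SigmaFiniteFiltration μ ℱ] {f : ℕ → Ω → ℝ}
    (hf : Martingale f ℱ μ) {i j : ℕ} (hij : i ≤ j) {ξ : Ω → ℝ}
    (hξ : StronglyMeasurable[ℱ i] ξ) (hint : Integrable (ξ * (f j - f i)) μ) :
    ∫ ω, ξ ω * (f j ω - f i ω) ∂μ = 0 := by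
  have hcond : μ[ξ * (f j - f i) | ℱ i] =ᵐ[μ] 0 := by
    filter_upwards [condExp_mul_of_stronglyMeasurable_left hξ hint
      ((hf.integrable j).sub (hf.integrable i)), hf.condExp_sub_ae_eq_zero hij] with ω h h0
    simp [h, h0]
  calc ∫ ω, ξ ω * (f j ω - f i ω) ∂μ = ∫ ω, μ[ξ * (f j - f i) | ℱ i] ω ∂μ :=
        (integral_condExp (ℱ.le i)).symm
    _ = 0 := by simp [integral_congr_ae hcond]

end MeasureTheory.Martingale

section Hedging

variable {Ω : Type*} {d n : ℕ}

theorem gainsT_zero (S : ℕ → Ω → Fin d → ℝ) (ω : Ω) : gainsT d n S (fun _ _ => 0) ω = 0 := by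
  simp [gainsT]

theorem costT_zero {c : ℕ → Ω → (Fin d → ℝ) → ℝ} (hc0 : ∀ k ω, c k ω 0 = 0) (ω : Ω) :
    costT d n c (fun _ _ => 0) ω = 0 := by
  simp [costT, incr, posn, hc0]

theorem costT_nonneg {c : ℕ → Ω → (Fin d → ℝ) → ℝ} (hc : ∀ k ω v, 0 ≤ c k ω v)
    (δ : ℕ → Ω → Fin d → ℝ) (ω : Ω) : 0 ≤ costT d n c δ ω :=
  Finset.sum_nonneg fun _ _ => hc _ _ _

theorem integral_gainsT_eq_zero [Finite Ω] {m0 : MeasurableSpace Ω} [MeasurableSingletonClass Ω]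
    {μ : Measure Ω} [IsFiniteMeasure μ] {ℱ : Filtration ℕ m0} {S : ℕ → Ω → Fin d → ℝ}
    (hS : Martingale S ℱ μ) {δ : ℕ → Ω → Fin d → ℝ}
    (hδ : ∀ k, StronglyMeasurable[ℱ k] (δ k)) :
    ∫ ω, gainsT d n S δ ω ∂μ = 0 := by
  unfold gainsT
  rw [integral_finsetSum _ fun _ _ => .of_finite]
  refine Finset.sum_eq_zero fun k _ => ?_
  rw [integral_finsetSum _ fun _ _ => .of_finite]
  refine Finset.sum_eq_zero fun i _ => ?_
  exact (hS.comp_continuousLinearMap (.proj i)).integral_mul_sub_eq_zero k.le_succ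
    ((continuous_apply i).comp_stronglyMeasurable (hδ k)) .of_finite

end Hedging

theorem oceM_zero_le_of_integral_nonpos {Ω : Type*} {m0 : MeasurableSpace Ω} {μ : Measure Ω}
    [IsProbabilityMeasure μ] {ℓ : ℝ → ℝ} (hℓmono : Monotone ℓ)
    (hℓconv : ConvexOn ℝ Set.univ ℓ) {X : Ω → ℝ} (hX : Integrable X μ)
    (hℓX : ∀ w, Integrable (fun ω => ℓ (-X ω - w)) μ) (hEX : ∫ ω, X ω ∂μ ≤ 0) :
    oceM μ ℓ (fun _ => 0) ≤ oceM μ ℓ X := by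
  refine iInf_mono fun w => EReal.coe_le_coe_iff.mpr (add_le_add_right ?_ w)
  calc ∫ _, ℓ (-0 - w) ∂μ = ℓ (-w) := by simp
    _ ≤ ℓ (∫ ω, (-X ω - w) ∂μ) := by
        rw [integral_sub (f := fun ω => -X ω) hX.neg (integrable_const w), integral_neg]
        exact hℓmono (by simp [hEX])
    _ ≤ ∫ ω, ℓ (-X ω - w) ∂μ :=
        hℓconv.map_integral_le (hℓconv.continuousOn isOpen_univ) isClosed_univ
          (ae_of_all _ fun _ => Set.mem_univ _) (hX.neg.sub (integrable_const w)) (hℓX w)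

theorem piF_zero_eq_oce_zero_general
    {Ω : Type*} [Fintype Ω] {m0 : MeasurableSpace Ω}
    [MeasurableSingletonClass Ω]
    (μ : Measure Ω) [IsProbabilityMeasure μ]
    (ℱ : Filtration ℕ m0)
    (d n : ℕ) (S : ℕ → Ω → Fin d → ℝ)
    (hS : Martingale S ℱ μ)
    (c : ℕ → Ω → (Fin d → ℝ) → ℝ)
    (hc0 : ∀ k ω, c k ω 0 = 0) (hcnonneg : ∀ k ω v, 0 ≤ c k ω v)
    (H : Set (ℕ → Ω → Fin d → ℝ))
    (hadapted : ∀ δ ∈ H, ∀ k, StronglyMeasurable[ℱ k] (δ k))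
    (hzero : (fun _ _ => 0 : ℕ → Ω → Fin d → ℝ) ∈ H)
    (ℓ : ℝ → ℝ) (hℓmono : Monotone ℓ) (hℓconv : ConvexOn ℝ Set.univ ℓ) :
    (⨅ δ ∈ H, oceM μ ℓ (fun ω => gainsT d n S δ ω - costT d n c δ ω)) =
      oceM μ ℓ (fun _ => 0) := by
  refine le_antisymm ?_ (le_iInf₂ fun δ hδ => ?_)
  · calc (⨅ δ ∈ H, oceM μ ℓ (fun ω => gainsT d n S δ ω - costT d n c δ ω))
        ≤ oceM μ ℓ (fun ω => gainsT d n S (fun _ _ => 0) ω - costT d n c (fun _ _ => 0) ω) :=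
          iInf₂_le _ hzero
      _ = oceM μ ℓ (fun _ => 0) := by simp only [gainsT_zero, costT_zero hc0, sub_self]
  · refine oceM_zero_le_of_integral_nonpos hℓmono hℓconv .of_finite (fun _ => .of_finite) ?_
    rw [integral_sub .of_finite .of_finite, integral_gainsT_eq_zero hS (hadapted δ hδ), zero_sub,
      neg_nonpos]
    exact integral_nonneg (costT_nonneg hcnonneg δ)

/-- if `S` is a martingale, every strategy in `H` is adapted, `0 ∈ H` and
`ρ` is the optimized certainty equivalent of a nondecreasing convex loss `ℓ`, then
`π(0) = ρ(0)`, i.e. `inf_{δ∈H} ρ((δ·S)_T − C_T(δ)) = ρ(0)` in `ℝ ∪ {−∞}`. -/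
theorem piF_zero_eq_oce_zero
    {Ω : Type*} [Fintype Ω] [Nonempty Ω] {m0 : MeasurableSpace Ω}
    [MeasurableSingletonClass Ω]
    (μ : Measure Ω) [IsProbabilityMeasure μ] (hfull : ∀ ω : Ω, 0 < μ {ω})
    (ℱ : Filtration ℕ m0)
    (d n : ℕ) (S : ℕ → Ω → Fin d → ℝ)
    (hS : Martingale S ℱ μ)
    (c : ℕ → Ω → (Fin d → ℝ) → ℝ)
    (hc0 : ∀ k ω, c k ω 0 = 0) (hcnonneg : ∀ k ω v, 0 ≤ c k ω v)
    (H : Set (ℕ → Ω → Fin d → ℝ)) (hH : H.Nonempty)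
    (hadapted : ∀ δ ∈ H, ∀ k, StronglyMeasurable[ℱ k] (δ k))
    (hzero : (fun _ _ => 0 : ℕ → Ω → Fin d → ℝ) ∈ H)
    (ℓ : ℝ → ℝ) (hℓmono : Monotone ℓ) (hℓconv : ConvexOn ℝ Set.univ ℓ) :
    (⨅ δ ∈ H, oceM μ ℓ (fun ω => gainsT d n S δ ω - costT d n c δ ω)) =
      oceM μ ℓ (fun _ => 0) :=
  piF_zero_eq_oce_zero_general μ ℱ d n S hS c hc0 hcnonneg H hadapted hzero ℓ hℓmono hℓconv
end
end

section
/- Let ρ : 𝒳 → ℝ be a convex risk measure on the finite probability space Ω, and for every probability measure Q on Ω define the minimal penalty α(Q) := sup_{X∈𝒳} ( E_Q[−X] − ρ(X) ) ∈ ℝ ∪ {+∞}. Then ρ admits the robust representation ρ(X) = max_Q ( E_Q[−X] − α(Q) ) for every X ∈ 𝒳, where the maximum is taken over all probability measures Q on Ω and is attained (i.e. ρ(X) ≥ E_Q[−X] − α(Q) for every probability measure Q, and there exists a probability measure Q* with ρ(X) = E_{Q*}[−X] − α(Q*)). -/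
/-!
A convex risk measure is antitone and cash-invariant, hence 1-Lipschitz for the sup norm and in
particular continuous. A continuous convex function has a subgradient at every point: separate the
point `(X, ρ X)` from the open convex strict epigraph by Hahn–Banach. On `Ω → ℝ` the subgradient
`ℓ` at `X` has the form `Z ↦ E_Q[-Z]`; monotonicity makes `Q` nonnegative, cash invariance gives
it total mass one, and the subgradient inequality says that `X` maximizes `E_Q[-·] - ρ`, i.e.
`α(Q) = E_Q[-X] - ρ(X)`.
-/

open Finset

noncomputable section

/-- The minimal penalty function `α(Q) = sup_X ( E_Q[−X] − ρ(X) )` of a risk measure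
`ρ` on a finite probability space, for a weight function `Q`, valued in
`ℝ ∪ {+∞}` (as `EReal`; it is never `−∞`). -/
def penalty {Ω : Type*} [Fintype Ω] (ρ : (Ω → ℝ) → ℝ) (Q : Ω → ℝ) : EReal :=
  ⨆ X : Ω → ℝ, (((∑ ω, Q ω * (-X ω)) - ρ X : ℝ) : EReal)

section Subgradient

variable {E : Type*} [TopologicalSpace E] [AddCommGroup E] [Module ℝ E]
  [IsTopologicalAddGroup E] [ContinuousSMul ℝ E]

theorem ConvexOn.exists_subgradient {φ : E → ℝ} (hconv : ConvexOn ℝ Set.univ φ)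
    (hcont : Continuous φ) (x : E) :
    ∃ ℓ : StrongDual ℝ E, ∀ y, φ x + ℓ (y - x) ≤ φ y := by
  have hS_open : IsOpen {p : E × ℝ | p.1 ∈ Set.univ ∧ φ p.1 < p.2} := by
    simpa using isOpen_lt (hcont.comp continuous_fst) continuous_snd
  obtain ⟨f, hf⟩ := geometric_hahn_banach_open_point hconv.convex_strict_epigraph hS_open
    (x := (x, φ x)) (by simp)
  set c := f (0, 1)
  set g : StrongDual ℝ E := f.comp (ContinuousLinearMap.inl ℝ E ℝ)
  have hf_apply : ∀ y t, f (y, t) = g y + t * c := fun y t => by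
    have hyt : ((y, t) : E × ℝ) = (y, 0) + t • (0, 1) := by simp
    rw [hyt, map_add, map_smul, smul_eq_mul]
    rfl
  have hc : c < 0 := by
    have := hf (x, φ x + 1) (by simp)
    rw [hf_apply, hf_apply] at this
    linarith
  refine ⟨(-c)⁻¹ • g, fun y => le_of_forall_gt fun t ht => ?_⟩
  have hsep := hf (y, t) (by simpa using ht)
  rw [hf_apply, hf_apply] at hsep
  have hslope : (-c)⁻¹ * (g y - g x) < t - φ x := by
    rw [inv_mul_lt_iff₀ (neg_pos.2 hc)]
    linarith
  simp only [smul_apply, map_sub, smul_eq_mul]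
  linarith

end Subgradient

section RiskMeasure

variable {Ω : Type*} [Fintype Ω] {ρ : (Ω → ℝ) → ℝ}

theorem lipschitzWith_one_of_antitone_of_cash (hmono : Antitone ρ)
    (hcash : ∀ (X : Ω → ℝ) (a : ℝ), ρ (fun ω => X ω + a) = ρ X - a) :
    LipschitzWith 1 ρ := by
  refine LipschitzWith.of_le_add fun Y Z => ?_
  have hle : (fun ω => Z ω + -dist Y Z) ≤ Y := fun ω => by
    have := dist_le_pi_dist Y Z ω
    rw [Real.dist_eq] at this
    linarith [neg_abs_le (Y ω - Z ω)]
  have := hmono hle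
  rw [hcash] at this
  linarith

theorem StrongDual.apply_eq_sum_mul_single [DecidableEq Ω] (ℓ : StrongDual ℝ (Ω → ℝ)) (Z : Ω → ℝ) :
    ℓ Z = ∑ ω, Z ω * ℓ (Pi.single ω 1) := by
  conv_lhs => rw [← univ_sum_single Z]
  refine (map_sum ℓ _ _).trans (sum_congr rfl fun ω _ => ?_)
  rw [← smul_eq_mul, ← map_smul, ← Pi.single_smul', smul_eq_mul, mul_one]

theorem exists_prob_forall_sub_le (hmono : Antitone ρ) (hconv : ConvexOn ℝ Set.univ ρ)
    (hcash : ∀ (X : Ω → ℝ) (a : ℝ), ρ (fun ω => X ω + a) = ρ X - a) (X : Ω → ℝ) :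
    ∃ Q : Ω → ℝ, (∀ ω, 0 ≤ Q ω) ∧ ∑ ω, Q ω = 1 ∧
      ∀ Y, ∑ ω, Q ω * (-Y ω) - ρ Y ≤ ∑ ω, Q ω * (-X ω) - ρ X := by
  classical
  obtain ⟨ℓ, hℓ⟩ :=
    hconv.exists_subgradient (lipschitzWith_one_of_antitone_of_cash hmono hcash).continuous X
  set Q : Ω → ℝ := fun ω => -ℓ (Pi.single ω 1)
  have hℓQ : ∀ Z, ℓ Z = ∑ ω, Q ω * (-Z ω) := fun Z => by
    simp only [Q, StrongDual.apply_eq_sum_mul_single ℓ Z, neg_mul_neg, mul_comm]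
  refine ⟨Q, fun ω => ?_, ?_, fun Y => ?_⟩
  · have := (hℓ (X + Pi.single ω 1)).trans
      (hmono (le_add_of_nonneg_right (Pi.single_nonneg.2 zero_le_one)))
    simp only [add_sub_cancel_left] at this
    simp only [Q]
    linarith
  · have hconst : ∀ c : ℝ, (∑ ω, Q ω) * -c ≤ -c := fun c => by
      have := hℓ (fun ω => X ω + c)
      rw [hcash, hℓQ] at this
      simp only [Pi.sub_apply, add_sub_cancel_left, ← sum_mul] at this
      linarith
    linarith [hconst 1, hconst (-1)]
  · have := hℓ Y
    rw [map_sub, hℓQ, hℓQ] at this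
    linarith

theorem le_penalty (Q X : Ω → ℝ) :
    ((∑ ω, Q ω * (-X ω) - ρ X : ℝ) : EReal) ≤ penalty ρ Q :=
  le_iSup (fun Y => ((∑ ω, Q ω * (-Y ω) - ρ Y : ℝ) : EReal)) X

theorem penalty_eq_of_forall_le {Q X : Ω → ℝ}
    (h : ∀ Y, ∑ ω, Q ω * (-Y ω) - ρ Y ≤ ∑ ω, Q ω * (-X ω) - ρ X) :
    penalty ρ Q = ((∑ ω, Q ω * (-X ω) - ρ X : ℝ) : EReal) :=
  le_antisymm (iSup_le fun Y => EReal.coe_le_coe_iff.2 (h Y)) (le_penalty Q X)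

end RiskMeasure

theorem robust_representation_general
    {Ω : Type*} [Fintype Ω]
    (ρ : (Ω → ℝ) → ℝ)
    (hmono : ∀ X₁ X₂ : Ω → ℝ, (∀ ω, X₂ ω ≤ X₁ ω) → ρ X₁ ≤ ρ X₂)
    (hconv : ∀ (X₁ X₂ : Ω → ℝ) (a : ℝ), a ∈ Set.Icc (0 : ℝ) 1 →
      ρ (fun ω => a * X₁ ω + (1 - a) * X₂ ω) ≤ a * ρ X₁ + (1 - a) * ρ X₂)
    (hcash : ∀ (X : Ω → ℝ) (a : ℝ), ρ (fun ω => X ω + a) = ρ X - a) :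
    ∀ X : Ω → ℝ,
      (∀ Q : Ω → ℝ, (∀ ω, 0 ≤ Q ω) → (∑ ω, Q ω) = 1 →
        ((∑ ω, Q ω * (-X ω) : ℝ) : EReal) - penalty ρ Q ≤ (ρ X : EReal)) ∧
      (∃ Q : Ω → ℝ, (∀ ω, 0 ≤ Q ω) ∧ (∑ ω, Q ω) = 1 ∧
        (ρ X : EReal) = ((∑ ω, Q ω * (-X ω) : ℝ) : EReal) - penalty ρ Q) := by
  have hanti : Antitone ρ := fun X₁ X₂ h => hmono X₂ X₁ h
  have hconvex : ConvexOn ℝ Set.univ ρ := ⟨convex_univ, fun X₁ _ X₂ _ a b ha _ hab => by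
    obtain rfl : b = 1 - a := by linarith
    exact hconv X₁ X₂ a ⟨ha, by linarith⟩⟩
  intro X
  refine ⟨fun Q _ _ => ?_, ?_⟩
  · calc ((∑ ω, Q ω * (-X ω) : ℝ) : EReal) - penalty ρ Q
        ≤ ((∑ ω, Q ω * (-X ω) : ℝ) : EReal) - ((∑ ω, Q ω * (-X ω) - ρ X : ℝ) : EReal) :=
          EReal.sub_le_sub le_rfl (le_penalty Q X)
      _ = ρ X := by norm_cast; ring
  · obtain ⟨Q, hQ_nonneg, hQ_sum, hQ_max⟩ := exists_prob_forall_sub_le hanti hconvex hcash X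
    refine ⟨Q, hQ_nonneg, hQ_sum, ?_⟩
    rw [penalty_eq_of_forall_le hQ_max]
    norm_cast
    ring

/-- robust representation of convex risk measures on a finite
probability space: `ρ(X) = max_Q ( E_Q[−X] − α(Q) )`, the maximum over all
probability measures `Q` on `Ω` being attained. -/
theorem robust_representation
    {Ω : Type*} [Fintype Ω] [Nonempty Ω]
    (P : Ω → ℝ) (hPpos : ∀ ω, 0 < P ω) (hPsum : ∑ ω, P ω = 1)
    (ρ : (Ω → ℝ) → ℝ)
    (hmono : ∀ X₁ X₂ : Ω → ℝ, (∀ ω, X₂ ω ≤ X₁ ω) → ρ X₁ ≤ ρ X₂)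
    (hconv : ∀ (X₁ X₂ : Ω → ℝ) (a : ℝ), a ∈ Set.Icc (0 : ℝ) 1 →
      ρ (fun ω => a * X₁ ω + (1 - a) * X₂ ω) ≤ a * ρ X₁ + (1 - a) * ρ X₂)
    (hcash : ∀ (X : Ω → ℝ) (a : ℝ), ρ (fun ω => X ω + a) = ρ X - a) :
    ∀ X : Ω → ℝ,
      (∀ Q : Ω → ℝ, (∀ ω, 0 ≤ Q ω) → (∑ ω, Q ω) = 1 →
        ((∑ ω, Q ω * (-X ω) : ℝ) : EReal) - penalty ρ Q ≤ (ρ X : EReal)) ∧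
      (∃ Q : Ω → ℝ, (∀ ω, 0 ≤ Q ω) ∧ (∑ ω, Q ω) = 1 ∧
        (ρ X : EReal) = ((∑ ω, Q ω * (-X ω) : ℝ) : EReal) - penalty ρ Q) :=
  robust_representation_general ρ hmono hconv hcash
end
end

section
/- Let Ω be a finite set and let ρ : (Ω → ℝ) → ℝ be continuous (with respect to pointwise convergence on ℝ^Ω) and monotone decreasing (Y₁ ≥ Y₂ pointwise implies ρ(Y₁) ≤ ρ(Y₂)). Let X, G, C : Ω → ℝ and let (G_n)_{n∈ℕ}, (C_n)_{n∈ℕ} be sequences of functions Ω → ℝ such that G_n → G pointwise, each C_n ≥ 0, and lim sup_{n→∞} C_n(ω) ≤ C(ω) for every ω ∈ Ω. Then lim inf_{n→∞} ρ(X + G_n − C_n) ≤ ρ(X + G − C). -/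
/-!
Since `Ω` is finite, for every `ε > 0` eventually `X + Gₙ - Cₙ ≥ X + G - C - ε` on all of `Ω`,
so monotonicity gives `liminf ρ(X + Gₙ - Cₙ) ≤ ρ(X + G - C - ε)`; continuity of `ρ` lets `ε → 0`.
-/

open Filter Topology

theorem eventually_sub_lt_sub_of_tendsto_of_limsup_le {ι : Type*} {l : Filter ι}
    {g c : ℝ} {gs cs : ι → ℝ} (hg : Tendsto gs l (𝓝 g))
    (hc : limsup (fun n => (cs n : EReal)) l ≤ c) {ε : ℝ} (hε : 0 < ε) :
    ∀ᶠ n in l, g - c - ε < gs n - cs n := by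
  have hcs : ∀ᶠ n in l, (cs n : EReal) < ((c + ε / 2 : ℝ) : EReal) :=
    eventually_lt_of_limsup_lt (hc.trans_lt (by exact_mod_cast (by linarith : c < c + ε / 2)))
  have hgs : ∀ᶠ n in l, g - ε / 2 < gs n := hg.eventually (eventually_gt_nhds (by linarith))
  filter_upwards [hcs, hgs] with n hcs hgs
  have hcs' : cs n < c + ε / 2 := by exact_mod_cast hcs
  linarith

theorem tendsto_apply_sub_const_nhdsGT_zero {Ω : Type*} {ρ : (Ω → ℝ) → ℝ}
    (hcont : Continuous ρ) (Y : Ω → ℝ) :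
    Tendsto (fun ε : ℝ => ρ (fun ω => Y ω - ε)) (𝓝[>] 0) (𝓝 (ρ Y)) := by
  have hpath : Continuous fun ε : ℝ => (fun ω => Y ω - ε : Ω → ℝ) := by fun_prop
  simpa [Function.comp_def] using
    ((hcont.comp hpath).tendsto 0).mono_left nhdsWithin_le_nhds

theorem liminf_le_of_forall_eventually_sub_le {Ω ι : Type*} {l : Filter ι} [l.NeBot]
    {ρ : (Ω → ℝ) → ℝ} (hcont : Continuous ρ) (hanti : Antitone ρ) {Y : Ω → ℝ}
    {Ys : ι → Ω → ℝ} (hYs : ∀ ε > 0, ∀ᶠ n in l, ∀ ω, Y ω - ε ≤ Ys n ω) :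
    liminf (fun n => (ρ (Ys n) : EReal)) l ≤ ρ Y := by
  have hbound : ∀ ε > 0, liminf (fun n => (ρ (Ys n) : EReal)) l ≤ ρ (fun ω => Y ω - ε) := by
    intro ε hε
    refine (liminf_le_liminf ?_).trans_eq (liminf_const _)
    filter_upwards [hYs ε hε] with n hn
    exact_mod_cast hanti hn
  refine ge_of_tendsto ((continuous_coe_real_ereal.tendsto _).comp
    (tendsto_apply_sub_const_nhdsGT_zero hcont Y)) ?_
  filter_upwards [self_mem_nhdsWithin] with ε hε using hbound ε hε

theorem liminf_risk_le_of_pointwise_limits_general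
    {Ω : Type*} [Fintype Ω]
    (ρ : (Ω → ℝ) → ℝ) (hcont : Continuous ρ)
    (hmono : ∀ Y₁ Y₂ : Ω → ℝ, (∀ ω, Y₂ ω ≤ Y₁ ω) → ρ Y₁ ≤ ρ Y₂)
    (X G C : Ω → ℝ) (Gseq Cseq : ℕ → Ω → ℝ)
    (hG : ∀ ω, Tendsto (fun n => Gseq n ω) atTop (nhds (G ω)))
    (hC : ∀ ω, limsup (fun n => ((Cseq n ω : ℝ) : EReal)) atTop ≤ ((C ω : ℝ) : EReal)) :
    liminf (fun n => ((ρ (fun ω => X ω + Gseq n ω - Cseq n ω) : ℝ) : EReal)) atTop ≤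
      ((ρ (fun ω => X ω + G ω - C ω) : ℝ) : EReal) := by
  refine liminf_le_of_forall_eventually_sub_le hcont (fun Y₁ Y₂ h => hmono Y₂ Y₁ h) ?_
  intro ε hε
  rw [eventually_all]
  intro ω
  filter_upwards [eventually_sub_lt_sub_of_tendsto_of_limsup_le (hG ω) (hC ω) hε] with n hn
  linarith

/-- if `Ω` is finite, `ρ` is continuous (for pointwise convergence) and
monotone decreasing, `G_n → G` pointwise, `C_n ≥ 0` and `limsup_n C_n(ω) ≤ C(ω)` for
every `ω`, then `liminf_n ρ(X + G_n − C_n) ≤ ρ(X + G − C)`. -/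
theorem liminf_risk_le_of_pointwise_limits
    {Ω : Type*} [Fintype Ω]
    (ρ : (Ω → ℝ) → ℝ) (hcont : Continuous ρ)
    (hmono : ∀ Y₁ Y₂ : Ω → ℝ, (∀ ω, Y₂ ω ≤ Y₁ ω) → ρ Y₁ ≤ ρ Y₂)
    (X G C : Ω → ℝ) (Gseq Cseq : ℕ → Ω → ℝ)
    (hG : ∀ ω, Tendsto (fun n => Gseq n ω) atTop (nhds (G ω)))
    (hCnonneg : ∀ n ω, 0 ≤ Cseq n ω)
    (hC : ∀ ω, limsup (fun n => ((Cseq n ω : ℝ) : EReal)) atTop ≤ ((C ω : ℝ) : EReal)) :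
    liminf (fun n => ((ρ (fun ω => X ω + Gseq n ω - Cseq n ω) : ℝ) : EReal)) atTop ≤
      ((ρ (fun ω => X ω + G ω - C ω) : ℝ) : EReal) :=
  liminf_risk_le_of_pointwise_limits_general ρ hcont hmono X G C Gseq Cseq hG hC
end
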